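/- arXiv:2208.02098 — 3 statements merged into one kernel-verified Lean document; each statement's English description precedes it below -/
import Mathlib

section
/- The function κ ↦ Γ(κ+1)^{-1/κ} is strictly decreasing on (0,∞), maps κ = 2 to 1/√2, κ = 1 to 1, and tends to e^γ as κ → 0⁺ (where γ is Euler's constant). Consequently, for an EACD(1) model with exponential unit-mean innovations, the tail index κ(α) solving α = Γ(κ+1)^{-1/κ} satisfies: κ > 2 iff α < 1/√2; κ = 2 iff α = 1/√2; 1 < κ < 2 iff 1/√2 < α < 1; κ = 1 iff α = 1; and 0 < κ < 1 iff 1 < α < e^γ. -/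
/-!
Since `Γ(1) = 1`, the exponent `log Γ(κ+1) / κ` in `Γ(κ+1)^(-1/κ) = exp (-log Γ(κ+1) / κ)` is the
slope of the secant of `log Γ` between `1` and `κ + 1`. On `(0, ∞)` the function `log Γ` is
strictly convex, being `log Γ(x+1) - log x`, a convex (Bohr–Mollerup) plus a strictly convex
function. So the slope increases strictly in `κ` and tends to `(log Γ)'(1) = Γ'(1) = -γ` as
`κ → 0`; hence `Γ(κ+1)^(-1/κ)` decreases strictly from its supremum `e^γ`, which it never
attains, and the classification is read off from `Γ(3)^(-1/2) = 1/√2` and `Γ(2)^(-1) = 1`.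
-/

open Real Filter Set Topology

theorem StrictMonoOn.lt_of_tendsto_nhdsGT {α β : Type*} [LinearOrder α] [TopologicalSpace α]
    [OrderTopology α] [DenselyOrdered α] [LinearOrder β] [TopologicalSpace β]
    [OrderClosedTopology β] {f : α → β} {a x : α} {L : β} (hf : StrictMonoOn f (Ioi a))
    (hL : Tendsto f (𝓝[>] a) (𝓝 L)) (hx : a < x) : L < f x := by
  obtain ⟨c, hac, hcx⟩ := exists_between hx
  have := nhdsGT_neBot_of_exists_gt ⟨x, hx⟩
  have hLc : L ≤ f c := le_of_tendsto hL <| by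
    filter_upwards [Ioo_mem_nhdsGT hac] with y hy
    exact (hf hy.1 hac hy.2).le
  exact hLc.trans_lt (hf hac hx hcx)

theorem strictConvexOn_log_Gamma : StrictConvexOn ℝ (Ioi 0) (log ∘ Gamma) := by
  have hshift : ConvexOn ℝ (Ioi 0) fun x => log (Gamma (x + 1)) :=
    (convexOn_log_Gamma.translate_left 1).subset
      (fun x (hx : 0 < x) => show (0 : ℝ) < 1 + x by linarith) (convex_Ioi 0)
  refine (hshift.add_strictConvexOn strictConcaveOn_log_Ioi.neg).congr fun x (hx : 0 < x) => ?_
  simp only [Pi.add_apply, Pi.neg_apply, Function.comp_apply,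
    Gamma_add_one hx.ne', log_mul hx.ne' (Gamma_pos_of_pos hx).ne']
  ring

theorem strictMonoOn_log_Gamma_add_one_div :
    StrictMonoOn (fun κ : ℝ => log (Gamma (κ + 1)) / κ) (Ioi 0) := by
  intro x (hx : 0 < x) y (hy : 0 < y) hxy
  have := strictConvexOn_log_Gamma.secant_strict_mono (a := 1) (x := x + 1) (y := y + 1)
    (mem_Ioi.2 one_pos) (mem_Ioi.2 (by linarith)) (mem_Ioi.2 (by linarith))
    (by simpa using hx.ne') (by simpa using hy.ne') (by linarith)
  simpa [Gamma_one] using this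

theorem tendsto_log_Gamma_add_one_div_nhdsNE :
    Tendsto (fun κ : ℝ => log (Gamma (κ + 1)) / κ) (𝓝[≠] 0) (𝓝 (-eulerMascheroniConstant)) := by
  have hderiv : HasDerivAt (log ∘ Gamma) (-eulerMascheroniConstant) 1 := by
    simpa [Gamma_one, Function.comp_def] using hasDerivAt_Gamma_one.log (by simp [Gamma_one])
  refine (hasDerivAt_iff_tendsto_slope_zero.mp hderiv).congr fun κ => ?_
  simp [Gamma_one, add_comm, div_eq_inv_mul]

theorem Gamma_add_one_rpow_neg_inv {κ : ℝ} (hκ : -1 < κ) :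
    Gamma (κ + 1) ^ (-(1 / κ)) = exp (-(log (Gamma (κ + 1)) / κ)) := by
  rw [rpow_def_of_pos (Gamma_pos_of_pos (by linarith))]
  ring_nf

theorem strictAntiOn_Gamma_add_one_rpow_neg_inv :
    StrictAntiOn (fun κ : ℝ => Gamma (κ + 1) ^ (-(1 / κ))) (Ioi 0) := by
  intro x (hx : 0 < x) y (hy : 0 < y) hxy
  simp only [Gamma_add_one_rpow_neg_inv (by linarith : -1 < x),
    Gamma_add_one_rpow_neg_inv (by linarith : -1 < y), exp_lt_exp, neg_lt_neg_iff]
  exact strictMonoOn_log_Gamma_add_one_div hx hy hxy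

theorem tendsto_log_Gamma_add_one_div_nhdsGT :
    Tendsto (fun κ : ℝ => log (Gamma (κ + 1)) / κ) (𝓝[>] 0) (𝓝 (-eulerMascheroniConstant)) :=
  tendsto_log_Gamma_add_one_div_nhdsNE.mono_left <| nhdsWithin_mono _ fun _ hκ => ne_of_gt hκ

theorem tendsto_Gamma_add_one_rpow_neg_inv :
    Tendsto (fun κ : ℝ => Gamma (κ + 1) ^ (-(1 / κ))) (𝓝[>] 0)
      (𝓝 (exp eulerMascheroniConstant)) := by
  have hexp := tendsto_log_Gamma_add_one_div_nhdsGT.neg.rexp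
  rw [neg_neg] at hexp
  refine hexp.congr' ?_
  filter_upwards [self_mem_nhdsWithin] with κ (hκ : 0 < κ)
  exact (Gamma_add_one_rpow_neg_inv (by linarith)).symm

theorem Gamma_add_one_rpow_neg_inv_lt_exp {κ : ℝ} (hκ : 0 < κ) :
    Gamma (κ + 1) ^ (-(1 / κ)) < exp eulerMascheroniConstant := by
  rw [Gamma_add_one_rpow_neg_inv (by linarith), exp_lt_exp, neg_lt]
  exact strictMonoOn_log_Gamma_add_one_div.lt_of_tendsto_nhdsGT
    tendsto_log_Gamma_add_one_div_nhdsGT hκ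

/-- Properties of `κ ↦ Γ(κ+1)^(-1/κ)`: strictly decreasing on `(0,∞)`, values at `κ = 2`
and `κ = 1`, limit `e^γ` as `κ → 0⁺`, and the resulting classification of the EACD tail
index `κ(α)` solving `α = Γ(κ+1)^(-1/κ)`. -/
theorem eacd_tail_index_classification :
    StrictAntiOn (fun κ : ℝ => Real.Gamma (κ + 1) ^ (-(1 / κ))) (Ioi 0) ∧
    Real.Gamma ((2 : ℝ) + 1) ^ (-(1 / (2 : ℝ))) = 1 / Real.sqrt 2 ∧
    Real.Gamma ((1 : ℝ) + 1) ^ (-(1 / (1 : ℝ))) = 1 ∧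
    Tendsto (fun κ : ℝ => Real.Gamma (κ + 1) ^ (-(1 / κ))) (nhdsWithin 0 (Ioi 0))
      (nhds (Real.exp Real.eulerMascheroniConstant)) ∧
    ∀ κ α : ℝ, 0 < κ → α = Real.Gamma (κ + 1) ^ (-(1 / κ)) →
      ((2 < κ ↔ α < 1 / Real.sqrt 2) ∧
       (κ = 2 ↔ α = 1 / Real.sqrt 2) ∧
       (1 < κ ∧ κ < 2 ↔ 1 / Real.sqrt 2 < α ∧ α < 1) ∧
       (κ = 1 ↔ α = 1) ∧
       (κ < 1 ↔ 1 < α ∧ α < Real.exp Real.eulerMascheroniConstant)) := by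
  set f := fun κ : ℝ => Gamma (κ + 1) ^ (-(1 / κ))
  have hanti : StrictAntiOn f (Ioi 0) := strictAntiOn_Gamma_add_one_rpow_neg_inv
  have hf2 : f 2 = 1 / √2 := by
    have hGamma3 : Gamma (2 + 1) = 2 := by rw [Gamma_add_one two_ne_zero, Gamma_two, mul_one]
    rw [show f 2 = Gamma (2 + 1) ^ (-(1 / 2 : ℝ)) from rfl, hGamma3, rpow_neg zero_le_two,
      ← sqrt_eq_rpow, one_div]
  have hf1 : f 1 = 1 := by norm_num [f, Gamma_two]
  refine ⟨hanti, hf2, hf1, tendsto_Gamma_add_one_rpow_neg_inv, fun κ α hκ hα => ?_⟩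
  have one_mem : (1 : ℝ) ∈ Ioi 0 := mem_Ioi.2 one_pos
  have two_mem : (2 : ℝ) ∈ Ioi 0 := mem_Ioi.2 two_pos
  have lt_f1 := hanti.lt_iff_gt hκ one_mem
  have f1_lt := hanti.lt_iff_gt one_mem hκ
  have lt_f2 := hanti.lt_iff_gt hκ two_mem
  have f2_lt := hanti.lt_iff_gt two_mem hκ
  have eq_f1 := hanti.injOn.eq_iff hκ one_mem
  have eq_f2 := hanti.injOn.eq_iff hκ two_mem
  rw [hf1] at lt_f1 f1_lt eq_f1
  rw [hf2] at lt_f2 f2_lt eq_f2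
  subst hα
  refine ⟨lt_f2.symm, eq_f2.symm, ?_, eq_f1.symm, ?_⟩
  · rw [← lt_f1, ← f2_lt, and_comm]
  · rw [← f1_lt]
    exact ⟨fun h => ⟨h, Gamma_add_one_rpow_neg_inv_lt_exp hκ⟩, And.left⟩
end

section
/- Let ε > 0 satisfy E[ε] = 1 and s² = E[ε²] < ∞ with ε non-degenerate, and fix α > 0. Define h(κ) = E[(αε)^κ] for κ ≥ 0. Then h is convex, h(0) = 1, h(1) = α, and h(2) = α²s². Consequently, if there is a unique positive solution κ to h(κ)=1, then: κ > 2 when α < 1/s, κ = 2 when α = 1/s, 1 < κ < 2 when 1/s < α < 1, κ = 1 when α = 1, and 0 < κ < 1 when α > 1 (with E[ln(αε)] < 0). -/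
/-!
Each `κ ↦ (α ε(ω))^κ` is convex, hence so is its average `h`. A convex `h` with
`h 0 = h κ₀ = 1` lies below `1` on `[0, κ₀]` and above `1` beyond `κ₀`, so the root `κ₀` is
located by the signs of `h 1 - 1 = α - 1` and `h 2 - 1 = α²s² - 1`; when one of these vanishes,
uniqueness of the root identifies it.
-/

open MeasureTheory Set

theorem convexOn_integral {Ω E : Type*} [MeasurableSpace Ω] {μ : Measure Ω} [AddCommGroup E]
    [Module ℝ E] {S : Set E} {F : E → Ω → ℝ} (hS : Convex ℝ S)
    (hF : ∀ᵐ ω ∂μ, ConvexOn ℝ S fun x => F x ω) (hint : ∀ x ∈ S, Integrable (F x) μ) :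
    ConvexOn ℝ S fun x => ∫ ω, F x ω ∂μ := by
  refine ⟨hS, fun x hx y hy a b ha hb hab => ?_⟩
  have hFx := hint x hx
  have hFy := hint y hy
  calc ∫ ω, F (a • x + b • y) ω ∂μ
      ≤ ∫ ω, (a * F x ω + b * F y ω) ∂μ := by
        refine integral_mono_ae (hint _ (hS hx hy ha hb hab))
          ((hFx.const_mul a).add (hFy.const_mul b)) ?_
        filter_upwards [hF] with ω hω using hω.2 hx hy ha hb hab
    _ = a • ∫ ω, F x ω ∂μ + b • ∫ ω, F y ω ∂μ := by
        rw [integral_add (hFx.const_mul a) (hFy.const_mul b), integral_const_mul,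
          integral_const_mul, smul_eq_mul, smul_eq_mul]

section RootLocation

variable {s : Set ℝ} {f : ℝ → ℝ} {a b t : ℝ}

theorem ConvexOn.lt_of_apply_lt (hf : ConvexOn ℝ s f) (ha : a ∈ s) (ht : t ∈ s) (hab : a < b)
    (hfab : f a ≤ f b) (hft : f t < f a) : t < b := by
  by_contra! hbt
  linarith [hf.le_right_of_left_le'' ha ht hab hbt hfab]

theorem ConvexOn.lt_of_lt_apply (hf : ConvexOn ℝ s f) (ha : a ∈ s) (hb : b ∈ s) (hat : a ≤ t)
    (hfba : f b ≤ f a) (hft : f a < f t) : b < t := by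
  by_contra! htb
  have := hf.le_on_segment ha hb (Icc_subset_segment ⟨hat, htb⟩)
  linarith [max_eq_left hfba]

end RootLocation

theorem acd_moment_function_convex_and_root_classification_general
    {Ω : Type*} [MeasurableSpace Ω] (μ : Measure Ω) [IsProbabilityMeasure μ]
    (ε : Ω → ℝ) (s α : ℝ) (hα : 0 < α)
    (hpos : ∀ᵐ ω ∂μ, 0 < ε ω)
    (hmean : ∫ ω, ε ω ∂μ = 1)
    (hsq : ∫ ω, (ε ω) ^ 2 ∂μ = s ^ 2) (hs : 0 < s)
    (hint : ∀ κ : ℝ, 0 ≤ κ → Integrable (fun ω => (α * ε ω) ^ κ) μ) :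
    ConvexOn ℝ (Ici 0) (fun κ : ℝ => ∫ ω, (α * ε ω) ^ κ ∂μ) ∧
    (∫ ω, (α * ε ω) ^ (0 : ℝ) ∂μ) = 1 ∧
    (∫ ω, (α * ε ω) ^ (1 : ℝ) ∂μ) = α ∧
    (∫ ω, (α * ε ω) ^ (2 : ℝ) ∂μ) = α ^ 2 * s ^ 2 ∧
    ∀ κ₀ : ℝ, 0 < κ₀ → (∫ ω, (α * ε ω) ^ κ₀ ∂μ) = 1 →
      (∀ κ : ℝ, 0 < κ → (∫ ω, (α * ε ω) ^ κ ∂μ) = 1 → κ = κ₀) →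
      ((α < 1 / s → 2 < κ₀) ∧
       (α = 1 / s → κ₀ = 2) ∧
       (1 / s < α → α < 1 → 1 < κ₀ ∧ κ₀ < 2) ∧
       (α = 1 → κ₀ = 1) ∧
       (1 < α → (∫ ω, Real.log (α * ε ω) ∂μ) < 0 → 0 < κ₀ ∧ κ₀ < 1)) := by
  set h : ℝ → ℝ := fun κ => ∫ ω, (α * ε ω) ^ κ ∂μ
  have hconv : ConvexOn ℝ (Ici 0) h := convexOn_integral (convex_Ici 0)
    (hpos.mono fun ω hω => (convexOn_rpow_left (mul_pos hα hω)).subset (subset_univ _)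
      (convex_Ici 0)) hint
  have h0 : h 0 = 1 := by simp [h]
  have h1 : h 1 = α := by simp [h, integral_const_mul, hmean]
  have h2 : h 2 = α ^ 2 * s ^ 2 := by
    simp only [h, Real.rpow_two, mul_pow, integral_const_mul, hsq]
  refine ⟨hconv, h0, h1, h2, fun κ₀ hκ₀ hroot huniq => ?_⟩
  have below_root {t : ℝ} (ht : 0 ≤ t) (hft : h t < 1) : t < κ₀ :=
    hconv.lt_of_apply_lt self_mem_Ici ht hκ₀ (h0.trans_le hroot.ge)
      (hft.trans_eq h0.symm)
  have above_root {t : ℝ} (ht : 0 ≤ t) (hft : 1 < h t) : κ₀ < t :=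
    hconv.lt_of_lt_apply self_mem_Ici hκ₀.le ht (hroot.trans h0.symm).le
      (h0.trans_lt hft)
  refine ⟨fun hlt => below_root zero_le_two ?_, fun heq => (huniq 2 two_pos ?_).symm,
    fun hlt hlt1 => ⟨below_root zero_le_one (h1 ▸ hlt1), above_root zero_le_two ?_⟩,
    fun heq => (huniq 1 one_pos (h1.trans heq)).symm,
    fun hgt _ => ⟨hκ₀, above_root zero_le_one (h1 ▸ hgt)⟩⟩
  · have := (lt_div_iff₀ hs).1 hlt
    rw [h2, ← mul_pow]
    nlinarith [mul_pos hα hs]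
  · change h 2 = 1
    rw [h2, heq]
    field_simp
  · have := (div_lt_iff₀ hs).1 hlt
    rw [h2, ← mul_pow]
    nlinarith

/-- Convexity of `h(κ) = E[(α ε)^κ]`, its values at `0, 1, 2`, and the resulting
classification of the unique positive root of `h(κ) = 1` in terms of `α` and `s`. -/
theorem acd_moment_function_convex_and_root_classification
    {Ω : Type*} [MeasurableSpace Ω] (μ : Measure Ω) [IsProbabilityMeasure μ]
    (ε : Ω → ℝ) (s α : ℝ) (hα : 0 < α)
    (hpos : ∀ᵐ ω ∂μ, 0 < ε ω)
    (hmean : ∫ ω, ε ω ∂μ = 1)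
    (hsq : ∫ ω, (ε ω) ^ 2 ∂μ = s ^ 2) (hs : 0 < s)
    (hnondeg : ¬ (∀ᵐ ω ∂μ, ε ω = 1))
    (hint : ∀ κ : ℝ, 0 ≤ κ → Integrable (fun ω => (α * ε ω) ^ κ) μ) :
    ConvexOn ℝ (Ici 0) (fun κ : ℝ => ∫ ω, (α * ε ω) ^ κ ∂μ) ∧
    (∫ ω, (α * ε ω) ^ (0 : ℝ) ∂μ) = 1 ∧
    (∫ ω, (α * ε ω) ^ (1 : ℝ) ∂μ) = α ∧
    (∫ ω, (α * ε ω) ^ (2 : ℝ) ∂μ) = α ^ 2 * s ^ 2 ∧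
    ∀ κ₀ : ℝ, 0 < κ₀ → (∫ ω, (α * ε ω) ^ κ₀ ∂μ) = 1 →
      (∀ κ : ℝ, 0 < κ → (∫ ω, (α * ε ω) ^ κ ∂μ) = 1 → κ = κ₀) →
      ((α < 1 / s → 2 < κ₀) ∧
       (α = 1 / s → κ₀ = 2) ∧
       (1 / s < α → α < 1 → 1 < κ₀ ∧ κ₀ < 2) ∧
       (α = 1 → κ₀ = 1) ∧
       (1 < α → (∫ ω, Real.log (α * ε ω) ∂μ) < 0 → 0 < κ₀ ∧ κ₀ < 1)) :=
  acd_moment_function_convex_and_root_classification_general μ ε s α hα hpos hmean hsq hs hint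
end

section
/- Let {x_i} be strictly stationary with regularly varying tail of index κ > 0 (P(x > z) ~ c z^{-κ}) and suppose T^{-1/κ} max_{1 ≤ s ≤ T} x_s converges in distribution to a Fréchet random variable. Let ν_T = N_T + 1 where N_T is the counting process of the partial sums of {x_i}, and suppose ν_T/T → 1/μ almost surely with μ = E[x] < ∞ (κ > 1). Then for any β > 1/κ, x_{ν_T} / T^β → 0 in probability as T → ∞. -/
open MeasureTheory ProbabilityTheory Filter Topology Finset

/-!
With 0-based indices, `x (N T)` is the paper's `x_{ν_T}`. Fix `M > 1/μ` and `k_T = ⌈M T⌉`.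
Since `ν_T / T → 1/μ` a.s., the event `x_0 + ⋯ + x_{k_T - 1} ≤ T` (i.e. `N_T ≥ k_T`) has vanishing
probability; off it, `x_{ν_T}` is one of `x_0, …, x_{k_T - 1}`, so by a union bound over these
identically distributed variables
`P(x_{ν_T} > δ T^β) ≤ P(N_T ≥ k_T) + k_T · P(x_0 > δ T^β)`.
The regularly varying tail makes the last term `O(T^{1 - βκ}) → 0`, because `βκ > 1`.
-/

theorem measureReal_lt_apply_index_le {Ω : Type*} [MeasurableSpace Ω] (μ : Measure Ω)
    [IsFiniteMeasure μ] (x : ℕ → Ω → ℝ) (hident : ∀ i, IdentDistrib (x i) (x 0) μ μ)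
    (ν : Ω → ℕ) (k : ℕ) (z : ℝ) :
    μ.real {ω | z < x (ν ω) ω} ≤ μ.real {ω | k ≤ ν ω} + k * μ.real {ω | z < x 0 ω} := by
  have hcover : {ω | z < x (ν ω) ω} ⊆ {ω | k ≤ ν ω} ∪ ⋃ s ∈ range k, {ω | z < x s ω} := by
    intro ω hω
    by_cases hk : k ≤ ν ω
    · exact Or.inl hk
    · exact Or.inr (Set.mem_biUnion (mem_range.mpr (not_le.mp hk)) hω)
  have hsame : ∀ s, μ.real {ω | z < x s ω} = μ.real {ω | z < x 0 ω} := fun s =>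
    congrArg ENNReal.toReal ((hident s).measure_mem_eq measurableSet_Ioi)
  calc μ.real {ω | z < x (ν ω) ω}
      ≤ μ.real {ω | k ≤ ν ω} + ∑ s ∈ range k, μ.real {ω | z < x s ω} :=
        (measureReal_mono hcover).trans
          ((measureReal_union_le _ _).trans (add_le_add le_rfl (measureReal_biUnion_finset_le _ _)))
    _ = μ.real {ω | k ≤ ν ω} + k * μ.real {ω | z < x 0 ω} := by
        simp only [hsame, sum_const, card_range, nsmul_eq_mul]

theorem eventually_lt_sum_range_ceil {x : ℕ → ℝ} {n : ℝ → ℕ}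
    (hn : ∀ T : ℝ, 0 ≤ T → ∀ k : ℕ, (∑ i ∈ range k, x i) ≤ T ↔ k ≤ n T) {a M : ℝ}
    (hrate : Tendsto (fun T : ℝ => ((n T : ℝ) + 1) / T) atTop (𝓝 a)) (haM : a < M) :
    ∀ᶠ T in atTop, T < ∑ i ∈ range ⌈M * T⌉₊, x i := by
  filter_upwards [hrate.eventually (eventually_lt_nhds haM), eventually_gt_atTop 0]
    with T hT hT0
  rw [← not_le, hn T hT0.le, not_le, ← Nat.cast_lt (α := ℝ)]
  rw [div_lt_iff₀ hT0] at hT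
  exact (lt_add_one _).trans (hT.trans_le (Nat.le_ceil _))

theorem tendsto_measure_sum_range_ceil_le {Ω : Type*} [MeasurableSpace Ω] {μ : Measure Ω}
    [IsFiniteMeasure μ] {x : ℕ → Ω → ℝ} (hmeas : ∀ i, Measurable (x i)) {N : ℝ → Ω → ℕ}
    (hN : ∀ ω, ∀ T : ℝ, 0 ≤ T → ∀ k : ℕ, (∑ i ∈ range k, x i ω) ≤ T ↔ k ≤ N T ω) {a M : ℝ}
    (hrate : ∀ᵐ ω ∂μ, Tendsto (fun T : ℝ => ((N T ω : ℝ) + 1) / T) atTop (𝓝 a)) (haM : a < M) :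
    Tendsto (fun T : ℝ => μ.real {ω | ∑ i ∈ range ⌈M * T⌉₊, x i ω ≤ T}) atTop (𝓝 0) := by
  have hmble : ∀ T : ℝ, MeasurableSet {ω | ∑ i ∈ range ⌈M * T⌉₊, x i ω ≤ T} := fun T =>
    measurableSet_le (Finset.measurable_sum _ fun i _ => hmeas i) measurable_const
  have hlim := tendsto_measure_of_ae_tendsto_indicator_of_isFiniteMeasure atTop
    MeasurableSet.empty hmble (μ := μ) <| by
      filter_upwards [hrate] with ω hω
      filter_upwards [eventually_lt_sum_range_ceil (hN ω) hω haM] with T hT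
      simpa using hT
  rw [measure_empty] at hlim
  simpa [Function.comp_def, Measure.real] using
    (ENNReal.tendsto_toReal ENNReal.zero_ne_top).comp hlim

theorem tendsto_natCeil_mul_div_rpow {M δ β κ : ℝ} (hM : 0 ≤ M) (hδ : 0 < δ) (hβκ : 1 < β * κ) :
    Tendsto (fun T : ℝ => (⌈M * T⌉₊ : ℝ) / (δ * T ^ β) ^ κ) atTop (𝓝 0) := by
  have hdecay : Tendsto (fun T : ℝ => (M + 1) * δ ^ (-κ) * T ^ (-(β * κ - 1))) atTop (𝓝 0) := by
    simpa using (tendsto_rpow_neg_atTop (by linarith : 0 < β * κ - 1)).const_mul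
      ((M + 1) * δ ^ (-κ))
  refine squeeze_zero' ?_ ?_ hdecay
  · filter_upwards [eventually_ge_atTop 0] with T hT
    positivity
  · filter_upwards [eventually_ge_atTop 1] with T hT
    have hT0 : 0 < T := by linarith
    have hceil : (⌈M * T⌉₊ : ℝ) ≤ (M + 1) * T := by
      nlinarith [Nat.ceil_lt_add_one (mul_nonneg hM hT0.le)]
    have hpow : (δ * T ^ β) ^ κ = δ ^ κ * T ^ (β * κ) := by
      rw [Real.mul_rpow hδ.le (by positivity), ← Real.rpow_mul hT0.le]
    calc (⌈M * T⌉₊ : ℝ) / (δ * T ^ β) ^ κ ≤ (M + 1) * T / (δ ^ κ * T ^ (β * κ)) := by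
          rw [hpow]; gcongr
      _ = (M + 1) * δ ^ (-κ) * T ^ (-(β * κ - 1)) := by
          rw [Real.rpow_neg hδ.le, Real.rpow_neg hT0.le, Real.rpow_sub_one hT0.ne']
          field_simp

theorem tendsto_natCeil_mul_comp_rpow {p : ℝ → ℝ} {c M δ β κ : ℝ}
    (hp : Tendsto (fun z : ℝ => z ^ κ * p z) atTop (𝓝 c)) (hM : 0 ≤ M) (hδ : 0 < δ)
    (hβ : 0 < β) (hβκ : 1 < β * κ) :
    Tendsto (fun T : ℝ => (⌈M * T⌉₊ : ℝ) * p (δ * T ^ β)) atTop (𝓝 0) := by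
  have hz : Tendsto (fun T : ℝ => δ * T ^ β) atTop atTop :=
    (tendsto_rpow_atTop hβ).const_mul_atTop hδ
  have hprod := (tendsto_natCeil_mul_div_rpow hM hδ hβκ).mul (hp.comp hz)
  rw [zero_mul] at hprod
  refine hprod.congr' ?_
  filter_upwards [hz.eventually_gt_atTop 0] with T hzT
  have : (δ * T ^ β) ^ κ ≠ 0 := (Real.rpow_pos_of_pos hzT κ).ne'
  simp only [Function.comp_apply]
  field_simp

theorem overshoot_negligible_finite_mean_general
    {Ω : Type*} [MeasurableSpace Ω] (μ : Measure Ω) [IsProbabilityMeasure μ]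
    (x : ℕ → Ω → ℝ) (hmeas : ∀ i, Measurable (x i))
    (hident : ∀ i, IdentDistrib (x i) (x 0) μ μ)
    (c κ μv : ℝ) (hκ : 1 < κ)
    (htail : Tendsto (fun z : ℝ => z ^ κ * (μ {ω | z < x 0 ω}).toReal) atTop (nhds c))
    (N : ℝ → Ω → ℕ)
    (hN : ∀ ω, ∀ T : ℝ, 0 ≤ T → ∀ k : ℕ,
      ((∑ i ∈ Finset.range k, x i ω) ≤ T ↔ k ≤ N T ω))
    (hν : ∀ᵐ ω ∂μ, Tendsto (fun T : ℝ => ((N T ω : ℝ) + 1) / T) atTop (nhds (1 / μv))) :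
    ∀ β : ℝ, 1/κ < β → ∀ δ : ℝ, 0 < δ →
      Tendsto (fun T : ℝ => (μ {ω | δ * T ^ β < x (N T ω) ω}).toReal) atTop (nhds 0) := by
  intro β hβ δ hδ
  have hβ0 : 0 < β := lt_trans (by positivity) hβ
  have hβκ : 1 < β * κ := by rwa [div_lt_iff₀ (by linarith)] at hβ
  obtain ⟨M, hM⟩ := exists_gt (max (1 / μv) 0)
  have hM0 : 0 ≤ M := (le_max_right _ _).trans hM.le
  have hbound : ∀ᶠ T in atTop, μ.real {ω | δ * T ^ β < x (N T ω) ω} ≤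
      μ.real {ω | ∑ i ∈ range ⌈M * T⌉₊, x i ω ≤ T} +
        ⌈M * T⌉₊ * μ.real {ω | δ * T ^ β < x 0 ω} := by
    filter_upwards [eventually_ge_atTop 0] with T hT
    have hcount : {ω | ⌈M * T⌉₊ ≤ N T ω} = {ω | ∑ i ∈ range ⌈M * T⌉₊, x i ω ≤ T} := by
      ext ω; exact (hN ω T hT _).symm
    simpa only [hcount] using measureReal_lt_apply_index_le μ x hident (N T) ⌈M * T⌉₊ (δ * T ^ β)
  have hlim := (tendsto_measure_sum_range_ceil_le hmeas hN hν ((le_max_left _ _).trans_lt hM)).add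
    (tendsto_natCeil_mul_comp_rpow htail hM0 hδ hβ0 hβκ)
  rw [add_zero] at hlim
  exact squeeze_zero' (Eventually.of_forall fun T => measureReal_nonneg) hbound hlim

/-- Negligibility of the overshoot duration `x_{ν_T}`, `ν_T = N_T + 1`, in the finite-mean
case: under a regularly varying marginal tail of index `κ > 1`, Fréchet convergence of the
normalized maxima, and `ν_T/T → 1/μ` a.s., one has `x_{ν_T}/T^β → 0` in probability for
every `β > 1/κ`. -/
theorem overshoot_negligible_finite_mean
    {Ω : Type*} [MeasurableSpace Ω] (μ : Measure Ω) [IsProbabilityMeasure μ]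
    (x : ℕ → Ω → ℝ) (hmeas : ∀ i, Measurable (x i))
    (hpos : ∀ᵐ ω ∂μ, ∀ i, 0 < x i ω)
    (hident : ∀ i, IdentDistrib (x i) (x 0) μ μ)
    (c κ μv : ℝ) (hc : 0 < c) (hκ : 1 < κ) (hμv : 0 < μv)
    (htail : Tendsto (fun z : ℝ => z ^ κ * (μ {ω | z < x 0 ω}).toReal) atTop (nhds c))
    (hfrechet : ∀ t : ℝ, 0 < t → Tendsto
      (fun n : ℕ => (μ {ω | ∀ s ∈ Finset.range n, x s ω ≤ t * (n : ℝ) ^ (1/κ)}).toReal)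
      atTop (nhds (Real.exp (-c * t ^ (-κ)))))
    (N : ℝ → Ω → ℕ)
    (hN : ∀ ω, ∀ T : ℝ, 0 ≤ T → ∀ k : ℕ,
      ((∑ i ∈ Finset.range k, x i ω) ≤ T ↔ k ≤ N T ω))
    (hν : ∀ᵐ ω ∂μ, Tendsto (fun T : ℝ => ((N T ω : ℝ) + 1) / T) atTop (nhds (1 / μv))) :
    ∀ β : ℝ, 1/κ < β → ∀ δ : ℝ, 0 < δ →
      Tendsto (fun T : ℝ => (μ {ω | δ * T ^ β < x (N T ω) ω}).toReal) atTop (nhds 0) :=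
  overshoot_negligible_finite_mean_general μ x hmeas hident c κ μv hκ htail N hN hν
end
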